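/- arXiv:1802.06566 — 3 statements merged into one kernel-verified Lean document; each statement's English description precedes it below -/
import Mathlib

section
/- For every integer n ≥ 1 and every real d ≥ 2, the polynomial equation (1 - z)(z d + 1)^n = 1 has a unique root in the interval (0, 1]. -/
/-!
`f(z) = (1 - z)(zd + 1)^n` has derivative `(zd + 1)^(n-1) (nd(1 - z) - (zd + 1))`, whose sign is that
of a decreasing affine function vanishing at `z₀ = (nd - 1)/(nd + d)`. When `nd > 1` this point lies in
`(0, 1)`, so `f` increases on `[0, z₀]` from `f 0 = 1` and then decreases to `f 1 = 0`. Hence `f` does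
not return to the value `1` on `(0, z₀]` and, by the intermediate value theorem, takes it exactly once
on `[z₀, 1]`.
-/

open Set

theorem existsUnique_mem_Ioc_eq_of_strictMonoOn_of_strictAntiOn {f : ℝ → ℝ} {a m b : ℝ}
    (ham : a < m) (hmb : m ≤ b) (hcont : ContinuousOn f (Icc m b))
    (hinc : StrictMonoOn f (Icc a m)) (hdec : StrictAntiOn f (Icc m b)) (hba : f b ≤ f a) :
    ∃! z, z ∈ Ioc a b ∧ f z = f a := by
  have hlt_left : ∀ y ∈ Ioc a m, f a < f y := fun y hy =>
    hinc (left_mem_Icc.mpr ham.le) (Ioc_subset_Icc_self hy) hy.1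
  obtain ⟨c, hc, hfc⟩ : ∃ c ∈ Icc m b, f c = f a :=
    intermediate_value_Icc' hmb hcont ⟨hba, (hlt_left m ⟨ham, le_rfl⟩).le⟩
  have hmc : m < c := hc.1.lt_of_ne fun hmc => (hlt_left m ⟨ham, le_rfl⟩).ne' (hmc ▸ hfc)
  refine ⟨c, ⟨⟨ham.trans hmc, hc.2⟩, hfc⟩, fun y ⟨hy, hfy⟩ => ?_⟩
  have hmy : m ≤ y := not_lt.mp fun hym => (hlt_left y ⟨hy.1, hym.le⟩).ne' hfy
  exact hdec.injOn ⟨hmy, hy.2⟩ hc (hfy.trans hfc.symm)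

def oneSubMulPow (n : ℕ) (d z : ℝ) : ℝ := (1 - z) * (z * d + 1) ^ n

/-- The critical point of `oneSubMulPow n d`. -/
noncomputable def oneSubMulPowPeak (n : ℕ) (d : ℝ) : ℝ := (n * d - 1) / (n * d + d)

namespace oneSubMulPow

variable {n : ℕ} {d : ℝ}

theorem continuous (n : ℕ) (d : ℝ) : Continuous (oneSubMulPow n d) := by
  unfold oneSubMulPow; fun_prop

theorem hasDerivAt (hn : n ≠ 0) (d z : ℝ) :
    HasDerivAt (oneSubMulPow n d) ((z * d + 1) ^ (n - 1) * (n * d * (1 - z) - (z * d + 1))) z := by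
  obtain ⟨m, rfl⟩ := Nat.exists_eq_succ_of_ne_zero hn
  have hlin : HasDerivAt (fun z : ℝ => z * d + 1) d z := by
    simpa using ((hasDerivAt_id z).mul_const d).add_const 1
  refine (((hasDerivAt_id z).const_sub 1).fun_mul (hlin.fun_pow (m + 1))).congr_deriv ?_
  simp only [id, Nat.succ_sub_one, Nat.cast_succ, pow_succ]
  ring

variable (hnd : 1 < n * d)
include hnd

theorem ne_zero_of_one_lt_mul : n ≠ 0 := by
  rintro rfl; norm_num at hnd

theorem pos_of_one_lt_mul : 0 < d :=
  pos_of_mul_pos_right (one_pos.trans hnd) n.cast_nonneg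

theorem peak_pos : 0 < oneSubMulPowPeak n d := by
  have := pos_of_one_lt_mul hnd
  unfold oneSubMulPowPeak; apply div_pos <;> linarith

theorem peak_lt_one : oneSubMulPowPeak n d < 1 := by
  have := pos_of_one_lt_mul hnd
  unfold oneSubMulPowPeak; rw [div_lt_one (by linarith)]; linarith

theorem strictMonoOn : StrictMonoOn (oneSubMulPow n d) (Icc 0 (oneSubMulPowPeak n d)) := by
  have hd := pos_of_one_lt_mul hnd
  refine strictMonoOn_of_hasDerivWithinAt_pos (convex_Icc _ _) (continuous n d).continuousOn
    (fun z _ => (hasDerivAt (ne_zero_of_one_lt_mul hnd) d z).hasDerivWithinAt) fun z hz => ?_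
  rw [interior_Icc] at hz
  have hz' : z * (n * d + d) < n * d - 1 := (lt_div_iff₀ (by linarith)).mp hz.2
  exact mul_pos (pow_pos (by nlinarith [hz.1]) _) (by linarith)

theorem strictAntiOn : StrictAntiOn (oneSubMulPow n d) (Icc (oneSubMulPowPeak n d) 1) := by
  have hd := pos_of_one_lt_mul hnd
  refine strictAntiOn_of_hasDerivWithinAt_neg (convex_Icc _ _) (continuous n d).continuousOn
    (fun z _ => (hasDerivAt (ne_zero_of_one_lt_mul hnd) d z).hasDerivWithinAt) fun z hz => ?_
  rw [interior_Icc] at hz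
  have hz0 : 0 < z := (peak_pos hnd).trans hz.1
  have hz' : n * d - 1 < z * (n * d + d) := (div_lt_iff₀ (by linarith)).mp hz.1
  exact mul_neg_of_pos_of_neg (pow_pos (by nlinarith) _) (by linarith)

end oneSubMulPow

/-- For every integer `n ≥ 1` and every real `d ≥ 2`, the equation
`(1 - z)(z d + 1)^n = 1` has a unique root in `(0, 1]`. -/
theorem unique_root_in_Ioc (n : ℕ) (hn : 1 ≤ n) (d : ℝ) (hd : 2 ≤ d) :
    ∃! z : ℝ, z ∈ Set.Ioc (0 : ℝ) 1 ∧ (1 - z) * (z * d + 1) ^ n = 1 := by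
  have hnd : 1 < n * d := by
    have : (1 : ℝ) ≤ n := by exact_mod_cast hn
    nlinarith
  have h0 : oneSubMulPow n d 0 = 1 := by simp [oneSubMulPow]
  have h1 : oneSubMulPow n d 1 ≤ oneSubMulPow n d 0 := by simp [oneSubMulPow]
  have hroot := existsUnique_mem_Ioc_eq_of_strictMonoOn_of_strictAntiOn
    (oneSubMulPow.peak_pos hnd) (oneSubMulPow.peak_lt_one hnd).le
    (oneSubMulPow.continuous n d).continuousOn (oneSubMulPow.strictMonoOn hnd)
    (oneSubMulPow.strictAntiOn hnd) h1
  rw [h0] at hroot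
  exact hroot
end

section
/- With the linear drift b defined on the region x_{0,0} > 0 (see context), the point x⋆ given by x⋆_{0,0} = 1-λ-1/d, x⋆_{0,1} = 1/d, x⋆_{1,1} = λ and zero elsewhere is the unique solution of the system b_{i,j}(x) = 0 for all 0 ≤ i ≤ j ≤ I together with the normalization Σ_{i,j} x_{i,j} = 1. -/
/-!
Below the diagonal the drift equations say that each column `j ≥ 2` grows geometrically,
`x i j = (1 + λd)^(i-1) x 1 j`. Substituting this into the diagonal equations `b_{i,i} = 0`
gives `x 1 i = λd · Σ_{j > i} x 1 j` for `i ≥ 2`, and a downward induction from `i = I` shows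
that row 1, hence every column `j ≥ 2`, vanishes. The remaining three coordinates are then
read off from `b_{1,1} = 0`, `b_{0,1} = 0` and the normalization.
-/

/-- The fixed point when `λ < 1 - 1/d`. -/
noncomputable def xstar (lam d : ℝ) : ℕ → ℕ → ℝ := fun i j =>
  if i = 0 ∧ j = 0 then 1 - lam - 1 / d
  else if i = 0 ∧ j = 1 then 1 / d
  else if i = 1 ∧ j = 1 then lam
  else 0

open Finset

lemma xstar_of_two_le {lam d : ℝ} {i j : ℕ} (hj : 2 ≤ j) : xstar lam d i j = 0 := by
  unfold xstar
  split_ifs <;> first | rfl | omega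

lemma eq_pow_mul_of_forall_succ_eq_mul {M : Type*} [Monoid M] {f : ℕ → M} {c : M} {n : ℕ}
    (hf : ∀ i, 1 ≤ i → i < n → f (i + 1) = c * f i) :
    ∀ i, 1 ≤ i → i ≤ n → f i = c ^ (i - 1) * f 1 := by
  intro i hi
  induction i, hi using Nat.le_induction with
  | base => simp
  | succ i hi ih =>
    intro hin
    rw [hf i hi hin, ih (by omega), show i + 1 - 1 = i - 1 + 1 by omega, pow_succ', mul_assoc]

lemma eq_zero_of_forall_eq_mul_sum_Ioc {R : Type*} [NonUnitalNonAssocSemiring R] {f : ℕ → R}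
    {a : R} {m n : ℕ}
    (hf : ∀ i, m ≤ i → i ≤ n → f i = a * ∑ j ∈ Ioc i n, f j) :
    ∀ i, m ≤ i → i ≤ n → f i = 0 := by
  intro i
  induction hk : n - i using Nat.strong_induction_on generalizing i with
  | _ k ih =>
    intro hmi hin
    rw [hf i hmi hin, sum_eq_zero, mul_zero]
    intro j hj
    rw [mem_Ioc] at hj
    exact ih (n - j) (by omega) j rfl (by omega) hj.2

lemma sum_Icc_eq_sum_Icc_of_eq_zero {M : Type*} [AddCommMonoid M] {f : ℕ → M} {a b n : ℕ}
    (hbn : b ≤ n) (hf : ∀ j, b < j → j ≤ n → f j = 0) :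
    ∑ j ∈ Icc a n, f j = ∑ j ∈ Icc a b, f j := by
  refine (sum_subset (Icc_subset_Icc_right hbn) fun j hj hjb => hf j ?_ ?_).symm <;>
    simp only [mem_Icc, not_and, not_le] at hj hjb <;> omega

section

variable {R : Type*} [CommRing R] [NoZeroDivisors R] {x : ℕ → ℕ → R} {a : R} {I : ℕ}

lemma eq_zero_of_one_le_of_drift_eq_zero (hc : 1 + a ≠ 0)
    (hbij : ∀ i j, 1 ≤ i → i < j → j ≤ I → x (i + 1) j - x i j - a * x i j = 0)
    (hbii : ∀ i, 1 < i → i ≤ I → -(x i i) + a * ((∑ j ∈ Icc i I, x i j) - x i i) = 0) :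
    ∀ i j, 1 ≤ i → i ≤ j → 2 ≤ j → j ≤ I → x i j = 0 := by
  have hcol : ∀ j ≤ I, ∀ i, 1 ≤ i → i ≤ j → x i j = (1 + a) ^ (i - 1) * x 1 j :=
    fun j hjI => eq_pow_mul_of_forall_succ_eq_mul fun i hi hij => by
      linear_combination hbij i j hi hij hjI
  have hrow : ∀ i, 2 ≤ i → i ≤ I → x 1 i = a * ∑ j ∈ Ioc i I, x 1 j := by
    intro i hi hiI
    have hdiag := hbii i hi hiI
    rw [← sum_Ioc_add_eq_sum_Icc hiI, add_sub_cancel_right,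
      sum_congr rfl fun j hj => hcol j (mem_Ioc.1 hj).2 i (by omega) (mem_Ioc.1 hj).1.le,
      ← mul_sum, hcol i hiI i (by omega) le_rfl] at hdiag
    have hfactor : (1 + a) ^ (i - 1) * (a * ∑ j ∈ Ioc i I, x 1 j - x 1 i) = 0 := by
      linear_combination hdiag
    exact (sub_eq_zero.1 ((mul_eq_zero.1 hfactor).resolve_left (pow_ne_zero _ hc))).symm
  intro i j hi hij hj hjI
  rw [hcol j hjI i hi hij, eq_zero_of_forall_eq_mul_sum_Ioc hrow j hj hjI, mul_zero]

lemma eq_zero_of_drift_eq_zero (ha : a ≠ 0) (hc : 1 + a ≠ 0)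
    (hb0j : ∀ j, 1 < j → j ≤ I → x 1 j - a * x 0 j = 0)
    (hbij : ∀ i j, 1 ≤ i → i < j → j ≤ I → x (i + 1) j - x i j - a * x i j = 0)
    (hbii : ∀ i, 1 < i → i ≤ I → -(x i i) + a * ((∑ j ∈ Icc i I, x i j) - x i i) = 0) :
    ∀ i j, i ≤ j → 2 ≤ j → j ≤ I → x i j = 0 := by
  have hupper := eq_zero_of_one_le_of_drift_eq_zero hc hbij hbii
  rintro (_ | i) j hij hj hjI
  · have hb := hb0j j hj hjI
    rw [hupper 1 j le_rfl (by omega) hj hjI, zero_sub, neg_eq_zero] at hb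
    exact (mul_eq_zero.1 hb).resolve_left ha
  · exact hupper (i + 1) j (by omega) hij hj hjI

end

section

variable {M : Type*} [AddCommMonoid M] {x : ℕ → ℕ → M} {I : ℕ}

lemma sum_Icc_eq_sum_Icc_one_of_eq_zero (hI : 1 ≤ I)
    (hx : ∀ i j, i ≤ j → 2 ≤ j → j ≤ I → x i j = 0) {i : ℕ} (hi : i ≤ 1) :
    ∑ j ∈ Icc i I, x i j = ∑ j ∈ Icc i 1, x i j :=
  sum_Icc_eq_sum_Icc_of_eq_zero hI fun j hj hjI => hx i j (by omega) hj hjI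

lemma sum_range_sum_Icc_eq_of_eq_zero (hI : 1 ≤ I)
    (hx : ∀ i j, i ≤ j → 2 ≤ j → j ≤ I → x i j = 0) :
    ∑ i ∈ range (I + 1), ∑ j ∈ Icc i I, x i j = x 0 0 + x 0 1 + x 1 1 := by
  have hrow (i : ℕ) (hi : 1 < i) (hiI : i ≤ I) : ∑ j ∈ Icc i I, x i j = 0 :=
    sum_eq_zero fun j hj => hx i j (mem_Icc.1 hj).1 (by simp only [mem_Icc] at hj; omega)
      (mem_Icc.1 hj).2
  rw [Nat.range_succ_eq_Icc_zero, sum_Icc_eq_sum_Icc_of_eq_zero hI hrow,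
    sum_Icc_succ_top zero_le_one, Icc_self, sum_singleton,
    sum_Icc_eq_sum_Icc_one_of_eq_zero hI hx zero_le_one,
    sum_Icc_eq_sum_Icc_one_of_eq_zero hI hx le_rfl, sum_Icc_succ_top zero_le_one, Icc_self,
    Icc_self, sum_singleton, sum_singleton, zero_add]

end

theorem fixed_point_unique_general (lam d : ℝ) (I : ℕ)
    (h0 : 0 < lam) (hd : 2 ≤ d) (x : ℕ → ℕ → ℝ)
    (hb00 : -lam + lam * d * ((∑ j ∈ Finset.Icc 0 I, x 0 j) - x 0 0) = 0)
    (hb01 : x 1 1 - lam * d * x 0 1 = 0)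
    (hb11 : -(x 1 1) + lam + lam * d * ((∑ j ∈ Finset.Icc 1 I, x 1 j) - x 1 1) = 0)
    (hb0j : ∀ j, 1 < j → j ≤ I → x 1 j - lam * d * x 0 j = 0)
    (hbij : ∀ i j, 1 ≤ i → i < j → j ≤ I → x (i + 1) j - x i j - lam * d * x i j = 0)
    (hbii : ∀ i, 1 < i → i ≤ I →
      -(x i i) + lam * d * ((∑ j ∈ Finset.Icc i I, x i j) - x i i) = 0)
    (hnorm : (∑ i ∈ Finset.range (I + 1), ∑ j ∈ Finset.Icc i I, x i j) = 1) :
    ∀ i j, i ≤ j → j ≤ I → x i j = xstar lam d i j := by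
  have hld : 0 < lam * d := by positivity
  have hI : 1 ≤ I := by
    by_contra! hI
    obtain rfl : I = 0 := by omega
    simp only [Icc_self, sum_singleton, sub_self, mul_zero, add_zero, neg_eq_zero] at hb00
    exact h0.ne' hb00
  have htail := eq_zero_of_drift_eq_zero hld.ne' (by positivity) hb0j hbij hbii
  rw [sum_Icc_eq_sum_Icc_one_of_eq_zero hI htail le_rfl, Icc_self, sum_singleton] at hb11
  rw [sum_range_sum_Icc_eq_of_eq_zero hI htail] at hnorm
  have hx11 : x 1 1 = lam := by linarith
  have hx01 : x 0 1 = 1 / d := by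
    rw [eq_div_iff (by positivity)]
    exact mul_left_cancel₀ h0.ne' (by linear_combination hx11 - hb01)
  have hx00 : x 0 0 = 1 - lam - 1 / d := by linarith
  intro i j hij hjI
  rcases le_or_gt 2 j with hj | hj
  · rw [xstar_of_two_le hj]
    exact htail i j hij hj hjI
  · interval_cases j <;> interval_cases i <;> simp [xstar, hx00, hx01, hx11]

/-- Any solution of the linear drift equations `b_{i,j}(x) = 0` (for all `0 ≤ i ≤ j ≤ I`)
together with the normalization `Σ x_{i,j} = 1` coincides with `x⋆`. -/
theorem fixed_point_unique (lam d : ℝ) (I : ℕ) (hI : 1 < I)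
    (h0 : 0 < lam) (hd : 2 ≤ d) (hlt : lam < 1 - 1 / d) (x : ℕ → ℕ → ℝ)
    (hb00 : -lam + lam * d * ((∑ j ∈ Finset.Icc 0 I, x 0 j) - x 0 0) = 0)
    (hb01 : x 1 1 - lam * d * x 0 1 = 0)
    (hb11 : -(x 1 1) + lam + lam * d * ((∑ j ∈ Finset.Icc 1 I, x 1 j) - x 1 1) = 0)
    (hb0j : ∀ j, 1 < j → j ≤ I → x 1 j - lam * d * x 0 j = 0)
    (hbij : ∀ i j, 1 ≤ i → i < j → j ≤ I → x (i + 1) j - x i j - lam * d * x i j = 0)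
    (hbii : ∀ i, 1 < i → i ≤ I →
      -(x i i) + lam * d * ((∑ j ∈ Finset.Icc i I, x i j) - x i i) = 0)
    (hnorm : (∑ i ∈ Finset.range (I + 1), ∑ j ∈ Finset.Icc i I, x i j) = 1) :
    ∀ i j, i ≤ j → j ≤ I → x i j = xstar lam d i j :=
  fixed_point_unique_general lam d I h0 hd x hb00 hb01 hb11 hb0j hbij hbii hnorm
end

section
/- Let d ≥ 2 be real and define F(z) = (λd)^{j⋆-2} (1 + 1/(z(1+λd)))^{j⋆-1} (λd - 1 + λd/(z(1+λd))) · C - z, where C = (1+λd)(1-λ) - 1/(1+λd)^{j⋆} > 0, λ ∈ (λ⋆_{j⋆}, λ⋆_{j⋆+1}), and j⋆ ≥ 2. Then F is strictly decreasing on (0,1], lim_{z→0+} F(z) = +∞, and F(1) < 0; consequently F has a unique root in (0,1). -/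
/-!
With `u = 1 / (z (1 + λd))`, the first term of `F` is `(λd) ^ (J - 2) C` times
`(1 + u) ^ (J - 1) (λd - 1 + λd u)`, which for `λd ≥ 1` is increasing and unbounded in `u ≥ 0`.
Hence `F` is strictly decreasing and tends to `+∞` at `0⁺`. The window `λ⋆_J < λ < λ⋆_{J+1}`
gives `0 < C < λd / (1 + λd) ^ J`, and the upper bound makes `F 1 < 0`. The intermediate value
theorem then yields the root.
-/

open Filter Set Topology

noncomputable def Fpoly (a : ℝ) (n : ℕ) (u : ℝ) : ℝ := (1 + u) ^ n * (a - 1 + a * u)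

section Fpoly

variable {a : ℝ}

theorem continuous_Fpoly (a : ℝ) (n : ℕ) : Continuous (Fpoly a n) := by
  unfold Fpoly
  fun_prop

theorem Fpoly_pos (ha : 1 ≤ a) (n : ℕ) {u : ℝ} (hu : 0 < u) : 0 < Fpoly a n u :=
  mul_pos (by positivity) (by nlinarith)

theorem monotoneOn_Fpoly (ha : 1 ≤ a) (n : ℕ) : MonotoneOn (Fpoly a n) (Ici 0) := by
  intro u (hu : 0 ≤ u) v (hv : 0 ≤ v) huv
  have : 0 ≤ a - 1 + a * u := by nlinarith
  unfold Fpoly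
  gcongr

theorem tendsto_Fpoly_atTop (ha : 1 ≤ a) (n : ℕ) : Tendsto (Fpoly a n) atTop atTop := by
  refine tendsto_atTop_mono' _ ?_
    (tendsto_atTop_add_const_left _ (a - 1) (tendsto_id.const_mul_atTop (by linarith)))
  filter_upwards [eventually_ge_atTop 0] with u hu
  show a - 1 + a * u ≤ _
  exact le_mul_of_one_le_left (by nlinarith) (one_le_pow₀ (by linarith))

/-- With `b = 1 + a` this reads `(a (b + 1)) ^ n (a b - 1) ≤ (b ^ 2) ^ n b ^ 2`,
and `a (b + 1) = b ^ 2 - 1`. -/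
theorem pow_mul_Fpoly_one_div_le (ha : 1 ≤ a) (n : ℕ) :
    a ^ n * Fpoly a n (1 / (1 + a)) ≤ (1 + a) ^ (n + 1) := by
  obtain ⟨b, hb⟩ : ∃ b, b = 1 + a := ⟨_, rfl⟩
  rw [← hb]
  have hb0 : 0 < b := by linarith
  have hb0' : b ≠ 0 := hb0.ne'
  have hab : a * (b + 1) ≤ b ^ 2 := by nlinarith
  have hab' : a * b - 1 ≤ b ^ 2 := by nlinarith
  have hexpand : a ^ n * Fpoly a n (1 / b) = (a * (b + 1)) ^ n * (a * b - 1) / b ^ (n + 1) := by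
    have h1 : 1 + 1 / b = (b + 1) / b := by field_simp
    have h2 : a - 1 + a * (1 / b) = (a * b - 1) / b := by
      field_simp
      linear_combination -hb
    rw [Fpoly, h1, h2, div_pow, mul_pow, pow_succ]
    field_simp
  rw [hexpand, div_le_iff₀ (by positivity)]
  calc (a * (b + 1)) ^ n * (a * b - 1) ≤ (b ^ 2) ^ n * b ^ 2 := by
        gcongr
        nlinarith
    _ = b ^ (n + 1) * b ^ (n + 1) := by ring

end Fpoly

theorem existsUnique_eq_zero_of_strictAntiOn {f : ℝ → ℝ} {a b : ℝ} (hab : a < b)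
    (hcont : ContinuousOn f (Ioc a b)) (hanti : StrictAntiOn f (Ioc a b))
    (hlim : Tendsto f (𝓝[>] a) atTop) (hb : f b < 0) :
    ∃! z, z ∈ Ioo a b ∧ f z = 0 := by
  obtain ⟨z₀, hz₀pos, hz₀⟩ :=
    ((hlim.eventually_gt_atTop 0).and (Ioo_mem_nhdsGT hab)).exists
  obtain ⟨z, hz, hz0⟩ : ∃ z ∈ Icc z₀ b, f z = 0 :=
    intermediate_value_Icc' hz₀.2.le (hcont.mono (Icc_subset_Ioc hz₀.1 le_rfl))
      ⟨hb.le, hz₀pos.le⟩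
  have hzb : z ≠ b := by
    rintro rfl
    exact hb.ne hz0
  have hz : z ∈ Ioo a b := ⟨hz₀.1.trans_le hz.1, hz.2.lt_of_ne hzb⟩
  refine ⟨z, ⟨hz, hz0⟩, fun y ⟨hy, hy0⟩ => ?_⟩
  exact hanti.injOn (Ioo_subset_Ioc_self hy) (Ioo_subset_Ioc_self hz) (hy0.trans hz0.symm)

theorem sub_one_div_pow_pos {b c : ℝ} {n : ℕ} (hb : 0 < b) (h : 1 < c * b ^ (n + 1)) :
    0 < b * c - 1 / b ^ n := by
  rw [sub_pos, div_lt_iff₀ (by positivity)]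
  calc 1 < c * b ^ (n + 1) := h
    _ = b * c * b ^ n := by ring

theorem sub_one_div_pow_lt {b c : ℝ} {n : ℕ} (hb : 0 < b) (h : c * b ^ n < 1) :
    b * c - 1 / b ^ n < (b - 1) / b ^ n := by
  rw [sub_div, sub_lt_sub_iff_right, lt_div_iff₀ (by positivity)]
  nlinarith

/-- The paper's `F` for `λd = a` and `J = k + 2`. -/
noncomputable def rootFn (a C : ℝ) (k : ℕ) (z : ℝ) : ℝ :=
  a ^ k * Fpoly a (k + 1) (1 / (z * (1 + a))) * C - z

section rootFn

variable {a C : ℝ} {k : ℕ}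

theorem continuousOn_rootFn (ha : 1 ≤ a) : ContinuousOn (rootFn a C k) (Ioi 0) := by
  have := continuous_Fpoly a (k + 1)
  unfold rootFn
  fun_prop (disch := intro z hz; exact (mul_pos hz (by linarith : (0 : ℝ) < 1 + a)).ne')

theorem strictAntiOn_rootFn (ha : 1 ≤ a) (hC : 0 ≤ C) :
    StrictAntiOn (rootFn a C k) (Ioi 0) := by
  intro z (hz : 0 < z) w (hw : 0 < w) hzw
  have hu : 1 / (w * (1 + a)) ≤ 1 / (z * (1 + a)) := by gcongr
  have hmono := monotoneOn_Fpoly ha (k + 1) (show (0 : ℝ) ≤ _ by positivity)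
    (show (0 : ℝ) ≤ _ by positivity) hu
  have := mul_le_mul_of_nonneg_right
    (mul_le_mul_of_nonneg_left hmono (pow_nonneg (by linarith : (0 : ℝ) ≤ a) k)) hC
  unfold rootFn
  linarith

theorem tendsto_rootFn (ha : 1 ≤ a) (hC : 0 < C) : Tendsto (rootFn a C k) (𝓝[>] 0) atTop := by
  have hu : Tendsto (fun z : ℝ => 1 / (z * (1 + a))) (𝓝[>] 0) atTop := by
    have hb : 0 < (1 + a)⁻¹ := inv_pos.mpr (by linarith)
    refine (tendsto_inv_nhdsGT_zero.atTop_mul_const hb).congr fun z => ?_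
    rw [one_div, mul_inv]
  have hmain := (((tendsto_Fpoly_atTop ha (k + 1)).comp hu).const_mul_atTop
    (by positivity : (0 : ℝ) < a ^ k)).atTop_mul_const hC
  refine (hmain.atTop_add (tendsto_nhdsWithin_of_tendsto_nhds tendsto_id).neg).congr ?_
  intro z
  simp [rootFn, sub_eq_add_neg, mul_assoc]

theorem rootFn_one_neg (ha : 1 ≤ a) (hC : C < a / (1 + a) ^ (k + 2)) : rootFn a C k 1 < 0 := by
  have hpos : 0 < a ^ k * Fpoly a (k + 1) (1 / (1 + a)) :=
    mul_pos (by positivity) (Fpoly_pos ha _ (by positivity))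
  have hle : a ^ k * Fpoly a (k + 1) (1 / (1 + a)) * (a / (1 + a) ^ (k + 2)) ≤ 1 := by
    rw [mul_div_assoc', div_le_one (by positivity)]
    calc a ^ k * Fpoly a (k + 1) (1 / (1 + a)) * a
        = a ^ (k + 1) * Fpoly a (k + 1) (1 / (1 + a)) := by ring
      _ ≤ (1 + a) ^ (k + 2) := pow_mul_Fpoly_one_div_le ha (k + 1)
  have := mul_lt_mul_of_pos_left hC hpos
  simp only [rootFn, one_mul]
  linarith

end rootFn

theorem F_unique_root_general (lam d : ℝ) (J : ℕ) (hJ : 2 ≤ J)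
    (hld : 1 ≤ lam * d)
    (hlow : (1 - lam) * (lam * d + 1) ^ J < 1)
    (hup : 1 < (1 - lam) * (lam * d + 1) ^ (J + 1))
    (C : ℝ) (hC : C = (1 + lam * d) * (1 - lam) - 1 / (1 + lam * d) ^ J)
    (F : ℝ → ℝ)
    (hF : ∀ z : ℝ, F z = (lam * d) ^ (J - 2) * (1 + 1 / (z * (1 + lam * d))) ^ (J - 1)
        * (lam * d - 1 + lam * d / (z * (1 + lam * d))) * C - z) :
    0 < C ∧ StrictAntiOn F (Set.Ioc 0 1) ∧
    Tendsto F (nhdsWithin 0 (Set.Ioi 0)) atTop ∧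
    F 1 < 0 ∧ ∃! z : ℝ, z ∈ Set.Ioo (0 : ℝ) 1 ∧ F z = 0 := by
  obtain ⟨k, rfl⟩ := Nat.exists_eq_add_of_le' hJ
  rw [add_comm (lam * d)] at hlow hup
  have hb : 0 < 1 + lam * d := by linarith
  have hCpos : 0 < C := hC ▸ sub_one_div_pow_pos hb hup
  have hClt : C < lam * d / (1 + lam * d) ^ (k + 2) := by
    simpa [hC] using sub_one_div_pow_lt hb hlow
  obtain rfl : F = rootFn (lam * d) C k := by
    funext z
    rw [hF, rootFn, Fpoly, mul_one_div, Nat.add_sub_cancel, show k + 2 - 1 = k + 1 by omega]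
    ring
  have hanti : StrictAntiOn (rootFn (lam * d) C k) (Ioc 0 1) :=
    (strictAntiOn_rootFn hld hCpos.le).mono Ioc_subset_Ioi_self
  have hlim := tendsto_rootFn (k := k) hld hCpos
  have hneg := rootFn_one_neg hld hClt
  exact ⟨hCpos, hanti, hlim, hneg, existsUnique_eq_zero_of_strictAntiOn one_pos
    ((continuousOn_rootFn hld).mono Ioc_subset_Ioi_self) hanti hlim hneg⟩

/-- The function `F` determining `x⋆_{j⋆,j⋆}` is strictly decreasing on `(0,1]`, tends to
`+∞` at `0⁺`, is negative at `1`, and hence has a unique root in `(0,1)`. -/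
theorem F_unique_root (lam d : ℝ) (J : ℕ) (hd : 2 ≤ d) (hJ : 2 ≤ J)
    (h0 : 0 < lam) (h1 : lam < 1) (hld : 1 ≤ lam * d)
    (hlow : (1 - lam) * (lam * d + 1) ^ J < 1)
    (hup : 1 < (1 - lam) * (lam * d + 1) ^ (J + 1))
    (C : ℝ) (hC : C = (1 + lam * d) * (1 - lam) - 1 / (1 + lam * d) ^ J)
    (F : ℝ → ℝ)
    (hF : ∀ z : ℝ, F z = (lam * d) ^ (J - 2) * (1 + 1 / (z * (1 + lam * d))) ^ (J - 1)
        * (lam * d - 1 + lam * d / (z * (1 + lam * d))) * C - z) :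
    0 < C ∧ StrictAntiOn F (Set.Ioc 0 1) ∧
    Tendsto F (nhdsWithin 0 (Set.Ioi 0)) atTop ∧
    F 1 < 0 ∧ ∃! z : ℝ, z ∈ Set.Ioo (0 : ℝ) 1 ∧ F z = 0 :=
  F_unique_root_general lam d J hJ hld hlow hup C hC F hF
end
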